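/- If Σ_s and Σ_t are symmetric positive definite circulant n×n matrices with PSDs q_s and q_t (so Σ_d = F diag(q_d) F*), then the Monge map A = Σ_s^{-1/2}(Σ_s^{1/2} Σ_t Σ_s^{1/2})^{1/2} Σ_s^{-1/2} equals F diag(q_t^{⊙1/2} ⊙ q_s^{⊙−1/2}) F*, and in particular A is itself a symmetric positive definite circulant matrix. -/

import Mathlib

open Matrix
open scoped ComplexOrder

/-- The unitary `n × n` DFT matrix, `(F)_{lm} = n^{-1/2} exp(-2πi l m / n)` (0-based). -/
noncomputable def dft (n : ℕ) : Matrix (Fin n) (Fin n) ℂ :=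
  fun l m => (1 / (Real.sqrt n : ℂ)) *
    Complex.exp (-(2 * Real.pi * Complex.I * (l : ℕ) * (m : ℕ)) / n)

/-- The (unique) positive semidefinite square root, extended by `0` to all matrices. -/
noncomputable def sqrtm {m : Type*} [Fintype m] [DecidableEq m]
    (A : Matrix m m ℂ) : Matrix m m ℂ :=
  open scoped Classical in
  if h : A.PosSemidef then
    (h.1.eigenvectorUnitary : Matrix m m ℂ) * diagonal ((↑) ∘ (Real.sqrt ∘ h.1.eigenvalues)) *
      (star h.1.eigenvectorUnitary : Matrix m m ℂ)
  else 0

section helpers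
variable {n : ℕ} [NeZero n]

lemma exp_congr_mod (k : ℕ) {z z' : ℤ} (h : (z : ZMod n) = (z' : ZMod n)) :
    Complex.exp (-(2 * Real.pi * Complex.I * k * z) / n) =
      Complex.exp (-(2 * Real.pi * Complex.I * k * z') / n) := by
  have hdvd : (n:ℤ) ∣ z - z' := by
    rw [ZMod.intCast_eq_intCast_iff'] at h
    exact Int.ModEq.dvd (Int.ModEq.symm h)
  obtain ⟨m, hm⟩ := hdvd
  have hn : (n:ℂ) ≠ 0 := Nat.cast_ne_zero.mpr (NeZero.ne n)
  have hz : (z:ℂ) = z' + n * m := by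
    have : (z:ℤ) = z' + n * m := by linarith [hm]
    exact_mod_cast congrArg (Int.cast : ℤ → ℂ) this
  rw [hz]
  have : (-(2 * ↑Real.pi * Complex.I * ↑k * (↑z' + ↑n * ↑m)) / ↑n)
      = (-(2 * ↑Real.pi * Complex.I * ↑k * ↑z') / ↑n) + ((-(k*m) : ℤ) * (2 * ↑Real.pi * Complex.I)) := by
    push_cast
    field_simp
    ring
  rw [this, Complex.exp_add, Complex.exp_int_mul_two_pi_mul_I, mul_one]

lemma dft_hmul : (dft n)ᴴ * dft n = 1 := by
  have hn : (n:ℂ) ≠ 0 := Nat.cast_ne_zero.mpr (NeZero.ne n)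
  have hns : ((Real.sqrt n : ℝ) : ℂ) * ((Real.sqrt n : ℝ) : ℂ) = (n:ℂ) := by
    rw [← Complex.ofReal_mul, Real.mul_self_sqrt (Nat.cast_nonneg n)]
    norm_cast
  ext i j
  simp only [Matrix.mul_apply, conjTranspose_apply, dft, one_apply]
  have hentry : ∀ l : Fin n,
      star ((1 / (Real.sqrt n : ℂ)) * Complex.exp (-(2 * Real.pi * Complex.I * (l:ℕ) * (i:ℕ)) / n)) *
        ((1 / (Real.sqrt n : ℂ)) * Complex.exp (-(2 * Real.pi * Complex.I * (l:ℕ) * (j:ℕ)) / n)) =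
      (1 / (n:ℂ)) * (Complex.exp (2 * Real.pi * Complex.I * ((i:ℕ) - (j:ℕ)) / n)) ^ (l:ℕ) := by
    intro l
    simp only [star_mul', Complex.star_def]
    rw [← Complex.exp_nat_mul, ← Complex.exp_conj]
    have h1 : (starRingEnd ℂ) (-(2 * Real.pi * Complex.I * (l:ℕ) * (i:ℕ)) / n)
        = (2 * Real.pi * Complex.I * (l:ℕ) * (i:ℕ)) / n := by
      simp [map_div₀, Complex.conj_I, map_ofNat]
    have h2 : (starRingEnd ℂ) ((1:ℂ) / (Real.sqrt n : ℂ)) = (1 / (Real.sqrt n : ℂ)) := by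
      simp [Complex.conj_ofReal]
    have h3 : (2 * Real.pi * Complex.I * (l:ℕ) * (i:ℕ)) / n + (-(2 * Real.pi * Complex.I * (l:ℕ) * (j:ℕ)) / n)
        = (l:ℕ) * (2 * Real.pi * Complex.I * ((i:ℕ) - (j:ℕ)) / n) := by
      field_simp; ring
    have h4 : (1 / (Real.sqrt n : ℂ)) * (1 / (Real.sqrt n : ℂ)) = 1 / (n:ℂ) := by
      rw [div_mul_div_comm, one_mul, hns]
    rw [h1, h2, mul_mul_mul_comm, ← Complex.exp_add, h3, h4]
  rw [Finset.sum_congr rfl (fun l _ => hentry l), ← Finset.mul_sum]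
  set z := Complex.exp (2 * Real.pi * Complex.I * ((i:ℕ) - (j:ℕ)) / n) with hz
  have hsum : ∑ l : Fin n, z ^ (l:ℕ) = ∑ l ∈ Finset.range n, z ^ l :=
    Fin.sum_univ_eq_sum_range _ n
  by_cases hij : i = j
  · subst hij
    have : z = 1 := by rw [hz]; simp
    rw [this]
    simp [hsum, hn, if_pos rfl]
  · have hzn : z ^ n = 1 := by
      rw [hz, ← Complex.exp_nat_mul]
      have : (n:ℂ) * (2 * Real.pi * Complex.I * ((i:ℕ) - (j:ℕ)) / n)
          = (((i:ℕ) : ℤ) - ((j:ℕ) : ℤ)) * (2 * Real.pi * Complex.I) := by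
        push_cast; field_simp
      rw [this]
      exact_mod_cast Complex.exp_int_mul_two_pi_mul_I _
    have hz1 : z ≠ 1 := by
      intro h1
      rw [hz, Complex.exp_eq_one_iff] at h1
      obtain ⟨m, hm⟩ := h1
      have hne2 : (2 * (Real.pi:ℂ) * Complex.I) ≠ 0 := by
        simp [Real.pi_ne_zero, Complex.I_ne_zero, Complex.ofReal_ne_zero]
      rw [div_eq_iff hn] at hm
      have hc : (((i:ℕ):ℂ) - ((j:ℕ):ℂ)) = (m:ℂ) * n := by
        have h4 : (2 * (Real.pi:ℂ) * Complex.I) * (((i:ℕ):ℂ) - ((j:ℕ):ℂ))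
            = (2 * (Real.pi:ℂ) * Complex.I) * ((m:ℂ) * n) := by linear_combination hm
        exact mul_left_cancel₀ hne2 h4
      have hz2 : ((i:ℕ):ℤ) - ((j:ℕ):ℤ) = m * n := by exact_mod_cast hc
      have hi := i.isLt; have hj := j.isLt
      have hn0 : 0 < (n:ℤ) := by exact_mod_cast Nat.pos_of_ne_zero (NeZero.ne n)
      have h5 : m * n < 1 * n := by rw [one_mul, ← hz2]; omega
      have h6 : (-1) * n < m * n := by rw [neg_one_mul, ← hz2]; omega
      have hm1 : m < 1 := lt_of_mul_lt_mul_right h5 (le_of_lt hn0)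
      have hm2 : -1 < m := lt_of_mul_lt_mul_right h6 (le_of_lt hn0)
      have : m = 0 := by omega
      subst this
      simp at hz2
      exact hij (Fin.ext (by omega))
    rw [hsum, geom_sum_eq hz1, hzn]
    simp [Ne.symm hij, hij]

lemma dft_mul_hmul : dft n * (dft n)ᴴ = 1 := mul_eq_one_comm.mpr dft_hmul

lemma dftc_mul (d e : Fin n → ℂ) :
    (dft n * diagonal d * (dft n)ᴴ) * (dft n * diagonal e * (dft n)ᴴ)
      = dft n * diagonal (fun i => d i * e i) * (dft n)ᴴ := by
  have : diagonal d * diagonal e = diagonal (fun i => d i * e i) := by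
    rw [diagonal_mul_diagonal]
  calc (dft n * diagonal d * (dft n)ᴴ) * (dft n * diagonal e * (dft n)ᴴ)
      = dft n * diagonal d * ((dft n)ᴴ * dft n) * diagonal e * (dft n)ᴴ := by
        simp only [Matrix.mul_assoc]
    _ = dft n * (diagonal d * diagonal e) * (dft n)ᴴ := by
        rw [dft_hmul, Matrix.mul_one]
        simp only [Matrix.mul_assoc]
    _ = dft n * diagonal (fun i => d i * e i) * (dft n)ᴴ := by rw [this]

lemma dftc_herm (d : Fin n → ℝ) :
    (dft n * diagonal (fun i => ((d i : ℝ) : ℂ)) * (dft n)ᴴ).IsHermitian := by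
  refine Matrix.isHermitian_mul_mul_conjTranspose (dft n) ?_
  exact Matrix.isHermitian_diagonal_of_self_adjoint _ (funext fun i => by
    simp [Complex.star_def, Complex.conj_ofReal])

lemma dftc_psd (d : Fin n → ℝ) (hd : ∀ i, 0 ≤ d i) :
    (dft n * diagonal (fun i => ((d i : ℝ) : ℂ)) * (dft n)ᴴ).PosSemidef := by
  refine Matrix.PosSemidef.mul_mul_conjTranspose_same ?_ (dft n)
  refine Matrix.posSemidef_diagonal_iff.mpr fun i => ?_
  exact_mod_cast hd i

lemma dftc_posDef (d : Fin n → ℝ) (hd : ∀ i, 0 < d i) :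
    (dft n * diagonal (fun i => ((d i : ℝ) : ℂ)) * (dft n)ᴴ).PosDef := by
  refine Matrix.PosDef.of_dotProduct_mulVec_pos (dftc_herm d) fun x hx => ?_
  have hD : (diagonal (fun i => ((d i : ℝ) : ℂ))).PosDef :=
    Matrix.PosDef.diagonal fun i => by exact_mod_cast hd i
  have hxne : (dft n)ᴴ *ᵥ x ≠ 0 := by
    intro h0
    apply hx
    have h1 : dft n *ᵥ ((dft n)ᴴ *ᵥ x) = x := by
      rw [mulVec_mulVec, dft_mul_hmul, one_mulVec]
    rw [h0, mulVec_zero] at h1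
    exact h1.symm
  simpa only [conjTranspose_conjTranspose, star_mulVec, dotProduct_mulVec, vecMul_vecMul]
    using hD.dotProduct_mulVec_pos hxne

open scoped MatrixOrder in
lemma dftc_sqrtm (d : Fin n → ℝ) (hd : ∀ i, 0 ≤ d i) :
    sqrtm (dft n * diagonal (fun i => ((d i : ℝ) : ℂ)) * (dft n)ᴴ)
      = dft n * diagonal (fun i => ((Real.sqrt (d i) : ℝ) : ℂ)) * (dft n)ᴴ := by
  have hpsd := dftc_psd d hd
  rw [sqrtm, dif_pos hpsd]
  refine Eq.trans ?_ (CFC.sqrt_unique (a := dft n * diagonal (fun i => ((d i : ℝ) : ℂ)) * (dft n)ᴴ)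
    ?_ (nonneg_iff_posSemidef.mpr (dftc_psd (fun i => Real.sqrt (d i)) (fun i => Real.sqrt_nonneg _))))
  · rw [CFC.sqrt_eq_cfc, cfc_nnreal_eq_real _ _ (nonneg_iff_posSemidef.mpr hpsd), hpsd.1.cfc_eq]
    simp only [IsHermitian.cfc, Unitary.conjStarAlgAut_apply, Real.coe_sqrt, Real.coe_toNNReal']
    congr 3
    funext i
    simp [max_eq_left (hpsd.eigenvalues_nonneg i)]
  rw [dftc_mul]
  have hfun : (fun i => ((Real.sqrt (d i) : ℝ) : ℂ) * ((Real.sqrt (d i) : ℝ) : ℂ))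
      = fun i => ((d i : ℝ) : ℂ) := by
    funext i
    rw [← Complex.ofReal_mul, Real.mul_self_sqrt (hd i)]
  rw [hfun]

lemma dftc_inv (a b : Fin n → ℝ) (hab : ∀ i, a i * b i = 1) :
    (dft n * diagonal (fun i => ((a i : ℝ) : ℂ)) * (dft n)ᴴ)⁻¹
      = dft n * diagonal (fun i => ((b i : ℝ) : ℂ)) * (dft n)ᴴ := by
  refine Matrix.inv_eq_right_inv ?_
  rw [dftc_mul]
  have : (fun i => ((a i : ℝ) : ℂ) * ((b i : ℝ) : ℂ)) = fun _ => (1:ℂ) := by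
    funext i
    rw [← Complex.ofReal_mul, hab i, Complex.ofReal_one]
  rw [this, diagonal_one, Matrix.mul_one, dft_mul_hmul]

lemma dftc_circulant (c : Fin n → ℂ) :
    ∃ v : Fin n → ℂ, dft n * diagonal c * (dft n)ᴴ = circulant v := by
  have hn : (n:ℂ) ≠ 0 := Nat.cast_ne_zero.mpr (NeZero.ne n)
  have hns : ((Real.sqrt n : ℝ) : ℂ) * ((Real.sqrt n : ℝ) : ℂ) = (n:ℂ) := by
    rw [← Complex.ofReal_mul, Real.mul_self_sqrt (Nat.cast_nonneg n)]
    norm_cast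
  refine ⟨fun t => ∑ k : Fin n, c k * ((1:ℂ)/n) *
    Complex.exp (-(2 * Real.pi * Complex.I * (k:ℕ) * ((t:ℕ):ℤ)) / n), ?_⟩
  ext i j
  have hentry : (dft n * diagonal c * (dft n)ᴴ) i j = ∑ k : Fin n, dft n i k * c k * star (dft n j k) := by
    rw [Matrix.mul_apply]
    refine Finset.sum_congr rfl fun k _ => ?_
    rw [Matrix.mul_diagonal, conjTranspose_apply]
  rw [hentry, circulant_apply]
  have key : ∀ k : Fin n, dft n i k * star (dft n j k)
      = ((1:ℂ)/n) * Complex.exp (-(2 * Real.pi * Complex.I * (k:ℕ) * (((i - j : Fin n):ℕ):ℤ)) / n) := by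
    intro k
    have hval : ((i - j : Fin n) : ℕ) = (n - (j:ℕ) + (i:ℕ)) % n := by
      rw [Fin.sub_def]
    have hmod : ((((i:ℕ):ℤ) - ((j:ℕ):ℤ) : ℤ) : ZMod n) = (((((i - j : Fin n):ℕ):ℤ) : ℤ) : ZMod n) := by
      rw [Int.cast_sub, Int.cast_natCast, Int.cast_natCast, Int.cast_natCast, hval,
        ZMod.natCast_mod, Nat.cast_add, Nat.cast_sub (le_of_lt j.isLt), ZMod.natCast_self]
      ring
    have hcongr := exp_congr_mod (n := n) (k:ℕ) hmod
    rw [← hcongr]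
    simp only [dft, star_mul', Complex.star_def, ← Complex.exp_conj]
    have h1 : (starRingEnd ℂ) (-(2 * Real.pi * Complex.I * (j:ℕ) * (k:ℕ)) / n)
        = (2 * Real.pi * Complex.I * (j:ℕ) * (k:ℕ)) / n := by
      simp [map_div₀, Complex.conj_I, map_ofNat]
    have h2 : (starRingEnd ℂ) ((1:ℂ) / (Real.sqrt n : ℂ)) = (1 / (Real.sqrt n : ℂ)) := by
      simp [Complex.conj_ofReal]
    rw [h1, h2, mul_mul_mul_comm, ← Complex.exp_add]
    have h4 : (1 / (Real.sqrt n : ℂ)) * (1 / (Real.sqrt n : ℂ)) = 1 / (n:ℂ) := by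
      rw [div_mul_div_comm, one_mul, hns]
    rw [h4]
    exact congrArg (fun w => 1 / (n:ℂ) * Complex.exp w) (by push_cast; ring)
  calc ∑ k : Fin n, dft n i k * c k * star (dft n j k)
      = ∑ k : Fin n, c k * (dft n i k * star (dft n j k)) := by
        refine Finset.sum_congr rfl fun k _ => by ring
    _ = ∑ k : Fin n, c k * (((1:ℂ)/n) *
          Complex.exp (-(2 * Real.pi * Complex.I * (k:ℕ) * ((((i - j : Fin n)):ℕ):ℤ)) / n)) := by
        refine Finset.sum_congr rfl fun k _ => by rw [key k]
    _ = _ := by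
        refine Finset.sum_congr rfl fun k _ => by ring

end helpers

section main
variable {n : ℕ} [NeZero n]

lemma main_eq (qs qt : Fin n → ℝ) (hqs : ∀ i, 0 < qs i) (hqt : ∀ i, 0 < qt i) :
    (sqrtm (dft n * diagonal (fun i => ((qs i : ℝ) : ℂ)) * (dft n)ᴴ))⁻¹ *
      sqrtm (sqrtm (dft n * diagonal (fun i => ((qs i : ℝ) : ℂ)) * (dft n)ᴴ) *
        (dft n * diagonal (fun i => ((qt i : ℝ) : ℂ)) * (dft n)ᴴ) *
        sqrtm (dft n * diagonal (fun i => ((qs i : ℝ) : ℂ)) * (dft n)ᴴ)) *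
      (sqrtm (dft n * diagonal (fun i => ((qs i : ℝ) : ℂ)) * (dft n)ᴴ))⁻¹
    = dft n * diagonal (fun i => ((Real.sqrt (qt i) / Real.sqrt (qs i) : ℝ) : ℂ)) * (dft n)ᴴ := by
  have h1 : sqrtm (dft n * diagonal (fun i => ((qs i : ℝ) : ℂ)) * (dft n)ᴴ)
      = dft n * diagonal (fun i => ((Real.sqrt (qs i) : ℝ) : ℂ)) * (dft n)ᴴ :=
    dftc_sqrtm qs (fun i => (hqs i).le)
  have h2 : (sqrtm (dft n * diagonal (fun i => ((qs i : ℝ) : ℂ)) * (dft n)ᴴ))⁻¹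
      = dft n * diagonal (fun i => (((Real.sqrt (qs i))⁻¹ : ℝ) : ℂ)) * (dft n)ᴴ := by
    rw [h1]
    exact dftc_inv _ _ (fun i => mul_inv_cancel₀ (Real.sqrt_ne_zero'.mpr (hqs i)))
  have h3 : sqrtm (dft n * diagonal (fun i => ((qs i : ℝ) : ℂ)) * (dft n)ᴴ) *
        (dft n * diagonal (fun i => ((qt i : ℝ) : ℂ)) * (dft n)ᴴ) *
        sqrtm (dft n * diagonal (fun i => ((qs i : ℝ) : ℂ)) * (dft n)ᴴ)
      = dft n * diagonal (fun i => ((Real.sqrt (qs i) * qt i * Real.sqrt (qs i) : ℝ) : ℂ)) *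
        (dft n)ᴴ := by
    rw [h1, dftc_mul, dftc_mul]
    have : (fun i => ((Real.sqrt (qs i) : ℝ) : ℂ) * ((qt i : ℝ) : ℂ) * ((Real.sqrt (qs i) : ℝ) : ℂ))
        = fun i => ((Real.sqrt (qs i) * qt i * Real.sqrt (qs i) : ℝ) : ℂ) := by
      funext i; push_cast; ring
    rw [this]
  have h4 : sqrtm (sqrtm (dft n * diagonal (fun i => ((qs i : ℝ) : ℂ)) * (dft n)ᴴ) *
        (dft n * diagonal (fun i => ((qt i : ℝ) : ℂ)) * (dft n)ᴴ) *
        sqrtm (dft n * diagonal (fun i => ((qs i : ℝ) : ℂ)) * (dft n)ᴴ))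
      = dft n * diagonal
          (fun i => ((Real.sqrt (Real.sqrt (qs i) * qt i * Real.sqrt (qs i)) : ℝ) : ℂ)) *
        (dft n)ᴴ := by
    rw [h3]
    exact dftc_sqrtm _ (fun i => mul_nonneg (mul_nonneg (Real.sqrt_nonneg _) (hqt i).le) (Real.sqrt_nonneg _))
  rw [h2, h4, dftc_mul, dftc_mul]
  have : (fun i => ((((Real.sqrt (qs i))⁻¹ : ℝ) : ℂ) *
        ((Real.sqrt (Real.sqrt (qs i) * qt i * Real.sqrt (qs i)) : ℝ) : ℂ)) *
        (((Real.sqrt (qs i))⁻¹ : ℝ) : ℂ))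
      = fun i => ((Real.sqrt (qt i) / Real.sqrt (qs i) : ℝ) : ℂ) := by
    funext i
    have ha : 0 < Real.sqrt (qs i) := Real.sqrt_pos.mpr (hqs i)
    have hkey : (Real.sqrt (qs i))⁻¹ * Real.sqrt (Real.sqrt (qs i) * qt i * Real.sqrt (qs i)) *
        (Real.sqrt (qs i))⁻¹ = Real.sqrt (qt i) / Real.sqrt (qs i) := by
      have h5 : Real.sqrt (qs i) * qt i * Real.sqrt (qs i) = qs i * qt i := by
        rw [mul_right_comm, Real.mul_self_sqrt (hqs i).le]
      rw [h5, Real.sqrt_mul (hqs i).le]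
      field_simp
    rw [← hkey]
    push_cast
    ring
  rw [this]

end main

/-- For symmetric positive definite circulant covariances `Σ_d = F diag(q_d) F*`, the Monge
map is `F diag(q_t^{⊙1/2} ⊙ q_s^{⊙−1/2}) F*`, which is itself symmetric positive definite
and circulant. -/
theorem monge_map_circulant {n : ℕ} [NeZero n]
    (qs qt : Fin n → ℝ) (hqs : ∀ i, 0 < qs i) (hqt : ∀ i, 0 < qt i) :
    let F := dft n
    let Ss := F * diagonal (fun i => (qs i : ℂ)) * Fᴴ
    let St := F * diagonal (fun i => (qt i : ℂ)) * Fᴴ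
    let A := (sqrtm Ss)⁻¹ * sqrtm (sqrtm Ss * St * sqrtm Ss) * (sqrtm Ss)⁻¹
    A = F * diagonal (fun i => ((Real.sqrt (qt i) / Real.sqrt (qs i) : ℝ) : ℂ)) * Fᴴ ∧
    A.IsHermitian ∧ A.PosDef ∧ ∃ v : Fin n → ℂ, A = circulant v := by
  intro F Ss St A
  have hA : A = dft n * diagonal (fun i => ((Real.sqrt (qt i) / Real.sqrt (qs i) : ℝ) : ℂ)) *
      (dft n)ᴴ := main_eq qs qt hqs hqt
  refine ⟨hA, ?_, ?_, ?_⟩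
  · rw [hA]; exact dftc_herm _
  · rw [hA]
    exact dftc_posDef _ (fun i => div_pos (Real.sqrt_pos.mpr (hqt i)) (Real.sqrt_pos.mpr (hqs i)))
  · rw [hA]; exact dftc_circulant _
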